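/- arXiv:math/0207308 — 4 statements merged into one kernel-verified Lean document; each statement's English description precedes it below -/
import Mathlib

section
/- Let G be a finite group and ρ₁, ρ₂ finite-dimensional complex representations of G with characters χ₁, χ₂. If χ₁(g)^k = χ₂(g)^k for all g ∈ G (for some positive integer k) and ρ₁ is irreducible, then ρ₂ is irreducible. -/
/-!
An operator of finite order on a complex space is diagonalizable with roots of unity as
eigenvalues, and on roots of unity inversion is complex conjugation; hence
`χ(g⁻¹) = conj χ(g)` and `∑ g, χ(g) χ(g⁻¹) = ∑ g, ‖χ(g)‖²`. The hypothesis forces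
`‖χ₁(g)‖ = ‖χ₂(g)‖`, so both characters have the same norm, and a representation is
irreducible iff its character has norm one.
-/

open CategoryTheory Module Polynomial Set

namespace Module.End

section Field

variable {K V : Type*} [Field K] [AddCommGroup V] [Module K V]

theorem isSemisimple_of_pow_eq_one [CharZero K] {f : End K V} {n : ℕ} (hn : n ≠ 0)
    (hf : f ^ n = 1) : f.IsSemisimple :=
  isSemisimple_of_squarefree_aeval_eq_zero
    (separable_X_pow_sub_C 1 (Nat.cast_ne_zero.mpr hn) one_ne_zero).squarefree (by simp [hf])

theorem HasEigenvalue.pow_eq_one {f : End K V} {μ : K} (hμ : f.HasEigenvalue μ) {n : ℕ}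
    (hf : f ^ n = 1) : μ ^ n = 1 := by
  obtain ⟨v, hv⟩ := hμ.exists_hasEigenvector
  refine smul_left_injective K hv.2 ?_
  simpa [hf] using (hv.pow_apply n).symm

theorem trace_restrict_eq_mul_finrank [FiniteDimensional K V] {f : End K V} {p : Submodule K V}
    (hf : MapsTo f p p) {c : K} (hc : ∀ v ∈ p, f v = c • v) :
    LinearMap.trace K p (f.restrict hf) = c * finrank K p := by
  have hf_eq : f.restrict hf = c • LinearMap.id := by
    ext ⟨v, hv⟩
    exact hc v hv
  rw [hf_eq, map_smul, LinearMap.trace_id, smul_eq_mul]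

end Field

theorem trace_inv_eq_conj_trace {V : Type*} [AddCommGroup V] [Module ℂ V]
    [FiniteDimensional ℂ V] (A : (End ℂ V)ˣ) (hA : IsOfFinOrder A) :
    LinearMap.trace ℂ V ↑A⁻¹ = starRingEnd ℂ (LinearMap.trace ℂ V A) := by
  classical
  obtain ⟨n, hn, hAn⟩ := hA.exists_pow_eq_one
  replace hAn : (A : End ℂ V) ^ n = 1 := by rw [← Units.val_pow_eq_pow_val, hAn, Units.val_one]
  have hint := DirectSum.isInternal_submodule_of_iSupIndep_of_iSup_eq_top
    (eigenspaces_iSupIndep _) (isSemisimple_of_pow_eq_one hn.ne' hAn).iSup_eigenspace_eq_top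
  have hfin := WellFoundedGT.finite_ne_bot_of_iSupIndep (eigenspaces_iSupIndep (A : End ℂ V))
  have hmaps (B : End ℂ V) (hB : Commute (A : End ℂ V) B) (μ : ℂ) :
      MapsTo B ((A : End ℂ V).eigenspace μ) ((A : End ℂ V).eigenspace μ) :=
    mapsTo_genEigenspace_of_comm hB μ 1
  rw [LinearMap.trace_eq_sum_trace_restrict' hint hfin (hmaps _ (Commute.refl _)),
    LinearMap.trace_eq_sum_trace_restrict' hint hfin (hmaps _ (Units.commute_coe_inv A)),
    map_sum]
  refine Finset.sum_congr rfl fun μ hμ => ?_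
  have hμn : μ ^ n = 1 :=
    HasEigenvalue.pow_eq_one (hasEigenvalue_iff.mpr (by simpa using hμ)) hAn
  have hμ0 : μ ≠ 0 := by rintro rfl; simp [hn.ne'] at hμn
  rw [trace_restrict_eq_mul_finrank _ (c := μ) fun v hv => mem_eigenspace_iff.mp hv,
    trace_restrict_eq_mul_finrank _ (c := μ⁻¹) fun v hv => ?_, map_mul, map_natCast,
    Complex.inv_eq_conj (Complex.norm_eq_one_of_pow_eq_one hμn hn.ne')]
  set B : End ℂ V := ↑A⁻¹
  calc B v = B (μ⁻¹ • (A : End ℂ V) v) := by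
        rw [mem_eigenspace_iff.mp hv, smul_smul, inv_mul_cancel₀ hμ0, one_smul]
    _ = μ⁻¹ • v := by rw [map_smul, ← mul_apply, Units.inv_mul, one_apply]

end Module.End

namespace FDRep

theorem char_inv {G : Type*} [Group G] [Finite G] (V : FDRep ℂ G) (g : G) :
    V.character g⁻¹ = starRingEnd ℂ (V.character g) := by
  have h := Module.End.trace_inv_eq_conj_trace (V.ρ.toHomUnits g)
    (V.ρ.toHomUnits.isOfFinOrder (isOfFinOrder_of_finite g))
  rwa [← map_inv, MonoidHom.coe_toHomUnits] at h

theorem char_mul_char_inv {G : Type*} [Group G] [Finite G] (V : FDRep ℂ G) (g : G) :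
    V.character g * V.character g⁻¹ = ‖V.character g‖ ^ 2 := by
  rw [char_inv, Complex.mul_conj']

theorem simple_of_forall_norm_char_eq {G : Type} [Group G] [Fintype G] {V W : FDRep ℂ G}
    [Simple V] (h : ∀ g, ‖V.character g‖ = ‖W.character g‖) : Simple W := by
  have hV := (simple_iff_char_is_norm_one V).mp ‹_›
  rw [simple_iff_char_is_norm_one, ← hV]
  simp only [char_mul_char_inv, h]

end FDRep

theorem stmt_1_general {G : Type} [Group G] [Fintype G]
    (ρ₁ ρ₂ : FDRep ℂ G) (k : ℕ) (hk : 0 < k)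
    (h : ∀ g : G, ρ₁.character g ^ k = ρ₂.character g ^ k)
    [Simple ρ₁] : Simple ρ₂ :=
  FDRep.simple_of_forall_norm_char_eq (V := ρ₁) fun g =>
    (pow_left_inj₀ (norm_nonneg _) (norm_nonneg _) hk.ne').mp (by rw [← norm_pow, h, norm_pow])

theorem stmt_1 {G : Type} [Group G] [Fintype G]
    (ρ₁ ρ₂ : FDRep ℂ G) (k : ℕ) (hk : 0 < k)
    (h : ∀ g : G, ρ₁.character g ^ k = ρ₂.character g ^ k)
    [Simple ρ₁] [Nontrivial ρ₂] : Simple ρ₂ :=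
  stmt_1_general ρ₁ ρ₂ k hk h
end

section
/- Let n be a positive integer and let λ₁ ≥ λ₂ ≥ ... ≥ λₙ and μ₁ ≥ μ₂ ≥ ... ≥ μₙ be real numbers. Fix a positive integer k. If the multiset of all sums Σᵢ kᵢλᵢ over tuples of nonnegative integers (k₁,...,kₙ) with Σᵢ kᵢ = k equals the corresponding multiset of sums Σᵢ kᵢμᵢ, then λᵢ = μᵢ for all i. -/
/-!
Compare the weight sums of the tuples `c` that put some mass at an index `≥ j`. If `λ` and `μ`
agree below `j`, the tuples supported below `j` have the same sums for both, so the equality of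
the full multisets leaves the multisets of the remaining sums equal. Since the weights decrease,
the largest remaining sum is `(k - 1) λ₀ + λⱼ`, attained at `(k - 1) e₀ + eⱼ`; comparing maxima
gives `λⱼ = μⱼ` by induction on `j`.
-/

open Finset

namespace WeightSum

variable {n : ℕ}

def weightSum (w : Fin n → ℝ) (c : Fin n → ℕ) : ℝ := ∑ i, (c i : ℝ) * w i

lemma weightSum_add (w : Fin n → ℝ) (c d : Fin n → ℕ) :
    weightSum w (c + d) = weightSum w c + weightSum w d := by
  simp only [weightSum, Pi.add_apply, Nat.cast_add, add_mul, sum_add_distrib]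

lemma weightSum_single (w : Fin n → ℝ) (i : Fin n) (m : ℕ) :
    weightSum w (Pi.single i m) = m * w i := by
  simp [weightSum, Pi.single_apply]

lemma weightSum_le_of_ne_zero [NeZero n] {w : Fin n → ℝ} (hw : Antitone w) {k : ℕ}
    {c : Fin n → ℕ} (hc : ∑ i, c i = k) {i j : Fin n} (hji : j ≤ i) (hci : c i ≠ 0) :
    weightSum w c ≤ (k - 1 : ℝ) * w 0 + w j := by
  have hterm : ∀ l, (c l : ℝ) * w l ≤ c l * w 0 + if l = i then w j - w 0 else 0 := by
    intro l
    have hl0 : w l ≤ w 0 := hw (Fin.zero_le l)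
    split_ifs with hli
    · subst hli
      have hc1 : (1 : ℝ) ≤ c l := by exact_mod_cast Nat.one_le_iff_ne_zero.2 hci
      nlinarith [hw hji]
    · nlinarith [(c l).cast_nonneg (α := ℝ)]
  calc weightSum w c ≤ ∑ l, ((c l : ℝ) * w 0 + if l = i then w j - w 0 else 0) :=
        sum_le_sum fun l _ => hterm l
    _ = (k - 1 : ℝ) * w 0 + w j := by
        rw [sum_add_distrib, ← sum_mul, ← Nat.cast_sum, hc, sum_ite_eq' univ i, if_pos (mem_univ i)]
        ring

def tuplesNotBelow (n k : ℕ) (j : Fin n) : Finset (Fin n → ℕ) :=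
  (Nat.antidiagonalTuple n k).filter fun c => ∃ i, j ≤ i ∧ c i ≠ 0

lemma isGreatest_weightSum_tuplesNotBelow [NeZero n] {w : Fin n → ℝ} (hw : Antitone w) {k : ℕ}
    (hk : 0 < k) (j : Fin n) :
    IsGreatest (weightSum w '' tuplesNotBelow n k j) ((k - 1 : ℝ) * w 0 + w j) := by
  refine ⟨⟨Pi.single 0 (k - 1) + Pi.single j 1, ?_, ?_⟩, ?_⟩
  · simp only [tuplesNotBelow, coe_filter, Nat.mem_antidiagonalTuple, Set.mem_ofPred_eq]
    refine ⟨?_, j, le_rfl, by simp⟩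
    simp only [Pi.add_apply, sum_add_distrib, sum_pi_single', mem_univ, if_true]
    omega
  · rw [weightSum_add, weightSum_single, weightSum_single, Nat.cast_sub hk, Nat.cast_one, one_mul]
  · rintro _ ⟨c, hc, rfl⟩
    simp only [tuplesNotBelow, coe_filter, Nat.mem_antidiagonalTuple, Set.mem_ofPred_eq] at hc
    obtain ⟨hsum, i, hji, hci⟩ := hc
    exact weightSum_le_of_ne_zero hw hsum hji hci

lemma image_weightSum_tuplesNotBelow_eq {k : ℕ} {lam mu : Fin n → ℝ} {j : Fin n}
    (hj : ∀ i < j, lam i = mu i)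
    (h : (Nat.antidiagonalTuple n k).val.map (weightSum lam) =
      (Nat.antidiagonalTuple n k).val.map (weightSum mu)) :
    weightSum lam '' tuplesNotBelow n k j = weightSum mu '' tuplesNotBelow n k j := by
  have hbelow : ∀ c ∈ (Nat.antidiagonalTuple n k).val.filter fun c => ¬∃ i, j ≤ i ∧ c i ≠ 0,
      weightSum lam c = weightSum mu c := by
    intro c hc
    have hc := Multiset.of_mem_filter hc
    push Not at hc
    refine sum_congr rfl fun i _ => ?_
    rcases lt_or_ge i j with hij | hji
    · rw [hj i hij]
    · simp [hc i hji]
  have hmap : (tuplesNotBelow n k j).val.map (weightSum lam) =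
      (tuplesNotBelow n k j).val.map (weightSum mu) := by
    rw [← Multiset.filter_add_not (fun c => ∃ i, j ≤ i ∧ c i ≠ 0) (Nat.antidiagonalTuple n k).val,
      Multiset.map_add, Multiset.map_add, Multiset.map_congr rfl hbelow] at h
    exact add_right_cancel h
  ext x
  simpa using congrArg (x ∈ ·) hmap

end WeightSum

open WeightSum in
theorem stmt_3 (n : ℕ) (hn : 0 < n) (lam mu : Fin n → ℝ)
    (hlam : Antitone lam) (hmu : Antitone mu) (k : ℕ) (hk : 0 < k)
    (h : ((Finset.Nat.antidiagonalTuple n k).val.map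
        (fun c : Fin n → ℕ => ∑ i, (c i : ℝ) * lam i)) =
      ((Finset.Nat.antidiagonalTuple n k).val.map
        (fun c : Fin n → ℕ => ∑ i, (c i : ℝ) * mu i))) :
    lam = mu := by
  have : NeZero n := ⟨hn.ne'⟩
  funext j
  induction j using WellFoundedLT.induction with
  | _ j ih =>
  have hmax : (k - 1 : ℝ) * lam 0 + lam j = (k - 1 : ℝ) * mu 0 + mu j :=
    (isGreatest_weightSum_tuplesNotBelow hlam hk j).unique <| by
      rw [image_weightSum_tuplesNotBelow_eq ih h]
      exact isGreatest_weightSum_tuplesNotBelow hmu hk j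
  rcases (Fin.zero_le j).eq_or_lt with rfl | hj
  · have hk' : (k : ℝ) ≠ 0 := by exact_mod_cast hk.ne'
    exact mul_left_cancel₀ hk' (by linarith)
  · rw [ih 0 hj] at hmax
    linarith
end

section
/- With notation as above (n an odd prime, a, b integers coprime to n, ρ_a, ρ_b the Heisenberg representations), the characters satisfy χ_a(h)ⁿ = χ_b(h)ⁿ for all h ∈ H_n; equivalently, the n-th tensor powers T^n(ρ_a) and T^n(ρ_b) have equal characters. However, if a ≢ b (mod n), there is no one-dimensional character η of H_n with ρ_a ≅ ρ_b ⊗ η. -/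
/-!
Every element of `H_n` can be written `C ^ k * B ^ j * A ^ i`. Under `ρ_c` this is `ξ ^ (c k)`
times a shift by `j` composed with the diagonal `(ξ ^ (p c i))_p`. Its trace vanishes unless
`n ∣ j` and (because `c` is invertible mod `n`) `n ∣ i`; in that case it equals `n ξ ^ (c k)`.
The `n`-th power removes the central factor, so it does not depend on `c`.
Since `C = ⁅A, B⁆`, every one-dimensional character `η` is trivial on `C`.
So `ρ_a ≅ ρ_b ⊗ η` would force the central characters to agree: `ξ ^ a = ξ ^ b`.
-/

open Matrix
open Fin.NatCast
open scoped commutatorElement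

section HeisenbergRelations

variable {G : Type*} [Group G] {A B C : G}

lemma pow_mul_eq_of_heisenberg (hAC : A * C = C * A) (hAB : A * B = C * B * A) (i : ℕ) :
    A ^ i * B = C ^ i * B * A ^ i := by
  induction i with
  | zero => simp
  | succ i ih =>
    have hACi : A * C ^ i = C ^ i * A := (Commute.pow_right hAC i).eq
    calc A ^ (i + 1) * B = A * C ^ i * B * A ^ i := by rw [pow_succ', mul_assoc, ih]; group
      _ = C ^ (i + 1) * B * A ^ (i + 1) := by rw [hACi, mul_assoc _ A B, hAB]; group

lemma exists_eq_heisenberg_normal_form (n : ℕ) [NeZero n]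
    (hA : A ^ n = 1) (hB : B ^ n = 1) (hC : C ^ n = 1)
    (hAC : A * C = C * A) (hBC : B * C = C * B) (hAB : A * B = C * B * A)
    (hgen : Subgroup.closure ({A, B, C} : Set G) = ⊤) (x : G) :
    ∃ i j k : ℕ, x = C ^ k * B ^ j * A ^ i := by
  have hfin : ∀ y ∈ ({A, B, C} : Set G), IsOfFinOrder y := by
    rintro y (rfl | rfl | rfl) <;>
      exact isOfFinOrder_iff_pow_eq_one.mpr ⟨n, Nat.pos_of_neZero n, by assumption⟩
  have hx : x ∈ Submonoid.closure ({A, B, C} : Set G) := by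
    rw [← Subgroup.closure_toSubmonoid_of_isOfFinOrder hfin, hgen]; trivial
  induction hx using Submonoid.closure_induction_right with
  | one => exact ⟨0, 0, 0, by simp⟩
  | mul_right x _ y hy ih =>
    obtain ⟨i, j, k, rfl⟩ := ih
    rcases hy with hy | hy | hy <;> rw [hy]
    · exact ⟨i + 1, j, k, by group⟩
    · refine ⟨i, j + 1, k + i, ?_⟩
      rw [mul_assoc, pow_mul_eq_of_heisenberg hAC hAB, ← mul_assoc, ← mul_assoc,
        mul_assoc _ _ (C ^ i), ((Commute.pow_right hBC i).pow_left j).eq]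
      group
    · refine ⟨i, j, k + 1, ?_⟩
      rw [mul_assoc, (Commute.pow_left hAC i).eq, ← mul_assoc, mul_assoc _ _ C,
        (Commute.pow_left hBC j).eq]
      group

lemma commutatorElement_eq_of_heisenberg (hAB : A * B = C * B * A) : ⁅A, B⁆ = C := by
  rw [commutatorElement_def, hAB]; group

end HeisenbergRelations

section ShiftMatrix

variable (R : Type*) [Semiring R] (n : ℕ) [NeZero n]

def shiftMatrix : Matrix (Fin n) (Fin n) R := of fun p q => if p = q + 1 then 1 else 0

variable {R n}

lemma shiftMatrix_apply (p q : Fin n) : shiftMatrix R n p q = if p = q + 1 then 1 else 0 := rfl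

lemma shiftMatrix_pow_apply (j : ℕ) (p q : Fin n) :
    (shiftMatrix R n ^ j) p q = if p = q + (j : Fin n) then 1 else 0 := by
  induction j generalizing p with
  | zero => simp [one_apply]
  | succ j ih =>
    rw [pow_succ', mul_apply, Finset.sum_eq_single (p - 1)]
    · simp [shiftMatrix_apply, ih, sub_eq_iff_eq_add, add_assoc]
    · intro r _ hr
      rw [shiftMatrix_apply, if_neg (by rintro rfl; simp at hr), zero_mul]
    · simp

lemma trace_shiftMatrix_pow_mul_diagonal (j : ℕ) (d : Fin n → R) :
    trace (shiftMatrix R n ^ j * diagonal d) = if n ∣ j then ∑ p, d p else 0 := by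
  simp only [trace, diag_apply, mul_diagonal, shiftMatrix_pow_apply, left_eq_add,
    Fin.natCast_eq_zero]
  split_ifs <;> simp

end ShiftMatrix

section Characters

variable {K : Type*} [Field K] {n : ℕ} {ξ : K}

lemma IsPrimitiveRoot.zpow_pow_eq_one (hξ : IsPrimitiveRoot ξ n) (m : ℤ) :
    (ξ ^ m) ^ n = 1 := by
  rw [← zpow_natCast, ← _root_.zpow_mul, (hξ.zpow_eq_one_iff_dvd _).mpr (dvd_mul_left _ _)]

lemma IsPrimitiveRoot.sum_zpow_mul (hξ : IsPrimitiveRoot ξ n) (m : ℤ) :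
    ∑ p : Fin n, ξ ^ ((p : ℤ) * m) = if (n : ℤ) ∣ m then (n : K) else 0 := by
  have hpow (p : Fin n) : ξ ^ ((p : ℤ) * m) = (ξ ^ m) ^ (p : ℕ) := by
    rw [mul_comm, _root_.zpow_mul, zpow_natCast]
  simp only [hpow, Fin.sum_univ_eq_sum_range (fun p => (ξ ^ m) ^ p)]
  split_ifs with hm
  · simp [(hξ.zpow_eq_one_iff_dvd m).mpr hm]
  · rw [geom_sum_eq (mt (hξ.zpow_eq_one_iff_dvd m).mp hm), hξ.zpow_pow_eq_one, sub_self,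
      zero_div]

variable [NeZero n]

lemma IsPrimitiveRoot.zpow_eq_zpow_iff_modEq (hξ : IsPrimitiveRoot ξ n) {a b : ℤ} :
    ξ ^ a = ξ ^ b ↔ a ≡ b [ZMOD n] := by
  have hξ0 : ξ ≠ 0 := hξ.ne_zero (NeZero.ne n)
  rw [Int.modEq_iff_dvd, ← hξ.zpow_eq_one_iff_dvd, zpow_sub₀ hξ0,
    div_eq_one_iff_eq (zpow_ne_zero a hξ0), eq_comm]

lemma trace_heisenberg_normal_form (hξ : IsPrimitiveRoot ξ n) {c : ℤ} (hc : IsCoprime c n)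
    (i j k : ℕ) :
    trace ((ξ ^ c • (1 : Matrix (Fin n) (Fin n) K)) ^ k * shiftMatrix K n ^ j *
        diagonal (fun p : Fin n => ξ ^ ((p : ℤ) * c)) ^ i) =
      (ξ ^ c) ^ k * if n ∣ j ∧ n ∣ i then (n : K) else 0 := by
  have hdvd : (n : ℤ) ∣ c * i ↔ n ∣ i :=
    ⟨fun h => Int.natCast_dvd_natCast.mp (hc.symm.dvd_of_dvd_mul_left h),
      fun h => dvd_mul_of_dvd_right (Int.natCast_dvd_natCast.mpr h) c⟩
  have hpow (p : Fin n) : (ξ ^ ((p : ℤ) * c)) ^ i = ξ ^ ((p : ℤ) * (c * i)) := by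
    rw [← zpow_natCast, ← _root_.zpow_mul, mul_assoc]
  rw [smul_pow, one_pow, smul_mul_assoc, one_mul, smul_mul_assoc, trace_smul, diagonal_pow,
    trace_shiftMatrix_pow_mul_diagonal, smul_eq_mul]
  simp only [Pi.pow_apply, hpow, hξ.sum_zpow_mul, hdvd, ite_and]

lemma trace_pow_map_heisenberg {G : Type*} [Group G] {A B C : G}
    (hξ : IsPrimitiveRoot ξ n) {c : ℤ} (hc : IsCoprime c n) (ρ : G →* GL (Fin n) K)
    (hρA : (ρ A : Matrix (Fin n) (Fin n) K) = diagonal (fun p : Fin n => ξ ^ ((p : ℤ) * c)))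
    (hρB : ∀ p q : Fin n, (ρ B : Matrix (Fin n) (Fin n) K) p q = if p = q + 1 then 1 else 0)
    (hρC : (ρ C : Matrix (Fin n) (Fin n) K) = ξ ^ c • 1) (i j k : ℕ) :
    trace (ρ (C ^ k * B ^ j * A ^ i) : Matrix (Fin n) (Fin n) K) ^ n =
      if n ∣ j ∧ n ∣ i then (n : K) ^ n else 0 := by
  have hρB' : (ρ B : Matrix (Fin n) (Fin n) K) = shiftMatrix K n := ext hρB
  rw [map_mul, map_mul, map_pow, map_pow, map_pow, Units.val_mul, Units.val_mul,
    Units.val_pow_eq_pow_val, Units.val_pow_eq_pow_val, Units.val_pow_eq_pow_val,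
    hρA, hρB', hρC, trace_heisenberg_normal_form hξ hc, mul_pow, pow_right_comm,
    hξ.zpow_pow_eq_one, one_pow, one_mul, ite_pow, zero_pow (NeZero.ne n)]

end Characters

theorem stmt_14_general (n : ℕ) [NeZero n]
    {G : Type*} [Group G] (A B C : G)
    (hA1 : A ^ n = 1) (hB1 : B ^ n = 1) (hC1 : C ^ n = 1)
    (hAC : A * C = C * A) (hBC : B * C = C * B) (hAB : A * B = C * B * A)
    (hgen : Subgroup.closure ({A, B, C} : Set G) = ⊤)
    (ξ : ℂ) (hξ : IsPrimitiveRoot ξ n)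
    (a b : ℤ) (ha : IsCoprime a (n : ℤ)) (hb : IsCoprime b (n : ℤ))
    (ρa ρb : G →* Matrix.GeneralLinearGroup (Fin n) ℂ)
    (hρaA : (ρa A : Matrix (Fin n) (Fin n) ℂ) =
      Matrix.diagonal (fun i : Fin n => ξ ^ ((i : ℤ) * a)))
    (hρaB : ∀ i j : Fin n, (ρa B : Matrix (Fin n) (Fin n) ℂ) i j =
      if i = j + 1 then 1 else 0)
    (hρaC : (ρa C : Matrix (Fin n) (Fin n) ℂ) =
      ξ ^ a • (1 : Matrix (Fin n) (Fin n) ℂ))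
    (hρbA : (ρb A : Matrix (Fin n) (Fin n) ℂ) =
      Matrix.diagonal (fun i : Fin n => ξ ^ ((i : ℤ) * b)))
    (hρbB : ∀ i j : Fin n, (ρb B : Matrix (Fin n) (Fin n) ℂ) i j =
      if i = j + 1 then 1 else 0)
    (hρbC : (ρb C : Matrix (Fin n) (Fin n) ℂ) =
      ξ ^ b • (1 : Matrix (Fin n) (Fin n) ℂ)) :
    (∀ h : G, (ρa h : Matrix (Fin n) (Fin n) ℂ).trace ^ n =
      (ρb h : Matrix (Fin n) (Fin n) ℂ).trace ^ n) ∧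
    (¬ a ≡ b [ZMOD (n : ℕ)] →
      ¬ ∃ (η : G →* ℂˣ) (P : Matrix.GeneralLinearGroup (Fin n) ℂ),
        ∀ g : G, (ρa g : Matrix (Fin n) (Fin n) ℂ) =
          (P : Matrix (Fin n) (Fin n) ℂ) *
            ((η g : ℂ) • (ρb g : Matrix (Fin n) (Fin n) ℂ)) *
              ((P⁻¹ : Matrix.GeneralLinearGroup (Fin n) ℂ) :
                Matrix (Fin n) (Fin n) ℂ)) := by
  constructor
  · intro h
    obtain ⟨i, j, k, rfl⟩ := exists_eq_heisenberg_normal_form n hA1 hB1 hC1 hAC hBC hAB hgen h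
    rw [trace_pow_map_heisenberg hξ ha ρa hρaA hρaB hρaC,
      trace_pow_map_heisenberg hξ hb ρb hρbA hρbB hρbC]
  · rintro hab ⟨η, P, hP⟩
    have hηC : (η C : ℂ) = 1 := by
      rw [← commutatorElement_eq_of_heisenberg hAB, map_commutatorElement,
        commutatorElement_eq_one_iff_mul_comm.mpr (mul_comm _ _), Units.val_one]
    have hscalar := hP C
    rw [hρaC, hρbC, hηC, one_smul, mul_smul_comm, mul_one, smul_mul_assoc, Units.mul_inv]
      at hscalar
    exact hab (hξ.zpow_eq_zpow_iff_modEq.mp (smul_left_injective ℂ one_ne_zero hscalar))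

theorem stmt_14 (n : ℕ) (hn : n.Prime) (hodd : Odd n) [NeZero n]
    {G : Type*} [Group G] (A B C : G)
    (hA1 : A ^ n = 1) (hB1 : B ^ n = 1) (hC1 : C ^ n = 1)
    (hAC : A * C = C * A) (hBC : B * C = C * B) (hAB : A * B = C * B * A)
    (hgen : Subgroup.closure ({A, B, C} : Set G) = ⊤)
    (ξ : ℂ) (hξ : IsPrimitiveRoot ξ n)
    (a b : ℤ) (ha : IsCoprime a (n : ℤ)) (hb : IsCoprime b (n : ℤ))
    (ρa ρb : G →* Matrix.GeneralLinearGroup (Fin n) ℂ)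
    (hρaA : (ρa A : Matrix (Fin n) (Fin n) ℂ) =
      Matrix.diagonal (fun i : Fin n => ξ ^ ((i : ℤ) * a)))
    (hρaB : ∀ i j : Fin n, (ρa B : Matrix (Fin n) (Fin n) ℂ) i j =
      if i = j + 1 then 1 else 0)
    (hρaC : (ρa C : Matrix (Fin n) (Fin n) ℂ) =
      ξ ^ a • (1 : Matrix (Fin n) (Fin n) ℂ))
    (hρbA : (ρb A : Matrix (Fin n) (Fin n) ℂ) =
      Matrix.diagonal (fun i : Fin n => ξ ^ ((i : ℤ) * b)))
    (hρbB : ∀ i j : Fin n, (ρb B : Matrix (Fin n) (Fin n) ℂ) i j =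
      if i = j + 1 then 1 else 0)
    (hρbC : (ρb C : Matrix (Fin n) (Fin n) ℂ) =
      ξ ^ b • (1 : Matrix (Fin n) (Fin n) ℂ)) :
    (∀ h : G, (ρa h : Matrix (Fin n) (Fin n) ℂ).trace ^ n =
      (ρb h : Matrix (Fin n) (Fin n) ℂ).trace ^ n) ∧
    (¬ a ≡ b [ZMOD (n : ℕ)] →
      ¬ ∃ (η : G →* ℂˣ) (P : Matrix.GeneralLinearGroup (Fin n) ℂ),
        ∀ g : G, (ρa g : Matrix (Fin n) (Fin n) ℂ) =
          (P : Matrix (Fin n) (Fin n) ℂ) *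
            ((η g : ℂ) • (ρb g : Matrix (Fin n) (Fin n) ℂ)) *
              ((P⁻¹ : Matrix.GeneralLinearGroup (Fin n) ℂ) :
                Matrix (Fin n) (Fin n) ℂ)) :=
  stmt_14_general n A B C hA1 hB1 hC1 hAC hBC hAB hgen ξ hξ a b ha hb ρa ρb hρaA hρaB hρaC hρbA hρbB
    hρbC
end

section
/- Let G be a group, G' a normal subgroup such that G/G' is cyclic and finite, and χ : G' → ℂˣ a homomorphism that is invariant under the conjugation action of G (i.e., χ(gxg⁻¹) = χ(x) for all g ∈ G, x ∈ G'). Assume further that every element of ℂˣ has roots of all orders (true for ℂ). Then χ extends to a homomorphism χ̃ : G → ℂˣ. -/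
/-!
Lift a generator of `G ⧸ N` to `g ∈ G` and let `ℤ` act on `N` by conjugation with powers of `g`.
Then `(n, k) ↦ n * g ^ k` maps `N ⋊ ℤ` onto `G`, and, since `χ` is conjugation invariant,
`(n, k) ↦ χ n * ζ ^ k` is a homomorphism on `N ⋊ ℤ` for every `ζ`. It factors through `G` as soon
as `χ (g ^ k) = ζ ^ k` whenever `g ^ k ∈ N`; as `g ^ k ∈ N` iff the order `m` of `g` in `G ⧸ N`
divides `k`, it suffices to take for `ζ` an `m`-th root of `χ (g ^ m)`.
-/

open Subgroup

section

variable {G A : Type*} [Group G] [CommGroup A] {N : Subgroup G} [hN : N.Normal]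

namespace Subgroup

variable (N) in
abbrev conjZPowers (g : G) : Multiplicative ℤ →* MulAut N :=
  MulAut.conjNormal.comp (zpowersHom G g)

variable (N) in
def mulZPow (g : G) : N ⋊[N.conjZPowers g] Multiplicative ℤ →* G :=
  SemidirectProduct.lift N.subtype (zpowersHom G g) fun _ => by
    ext x
    exact MulAut.conjNormal_apply _ x

theorem mulZPow_apply (g : G) (p : N ⋊[N.conjZPowers g] Multiplicative ℤ) :
    N.mulZPow g p = p.left * g ^ p.right.toAdd := rfl

theorem mulZPow_surjective {g : G} (hg : ∀ q : G ⧸ N, q ∈ zpowers (g : G ⧸ N)) :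
    Function.Surjective (N.mulZPow g) := by
  intro x
  obtain ⟨k, hk⟩ := hg x
  have hx : x * g ^ (-k) ∈ N := by
    rw [← QuotientGroup.eq_one_iff, QuotientGroup.mk_mul, QuotientGroup.mk_zpow, ← hk]
    group
  exact ⟨⟨⟨_, hx⟩, .ofAdd k⟩, by simp [mulZPow_apply]⟩

theorem zpow_mem_iff_orderOf_mk_dvd (g : G) (k : ℤ) :
    g ^ k ∈ N ↔ (orderOf (g : G ⧸ N) : ℤ) ∣ k := by
  rw [← QuotientGroup.eq_one_iff, QuotientGroup.mk_zpow, orderOf_dvd_iff_zpow_eq_one]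

end Subgroup

namespace MonoidHom

variable (χ : N →* A)

def ConjInvariant : Prop :=
  ∀ (g : G) (x : N), χ ⟨g * x * g⁻¹, hN.conj_mem x x.2 g⟩ = χ x

def semidirectZPow (hχ : χ.ConjInvariant) (g : G) (ζ : A) :
    N ⋊[N.conjZPowers g] Multiplicative ℤ →* A :=
  SemidirectProduct.lift χ (zpowersHom A ζ) fun _ => by
    ext x
    simp only [MonoidHom.comp_apply, MulEquiv.coe_toMonoidHom, MulAut.conj_apply]
    rw [mul_inv_cancel_comm]
    exact hχ _ x

theorem semidirectZPow_apply (hχ : χ.ConjInvariant) (g : G) (ζ : A)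
    (p : N ⋊[N.conjZPowers g] Multiplicative ℤ) :
    χ.semidirectZPow hχ g ζ p = χ p.left * ζ ^ p.right.toAdd := rfl

variable {χ} in
theorem ker_mulZPow_le_ker_semidirectZPow (hχ : χ.ConjInvariant) {g : G} {ζ : A}
    (hζ : ∀ (k : ℤ) (h : g ^ k ∈ N), χ ⟨g ^ k, h⟩ = ζ ^ k) :
    (N.mulZPow g).ker ≤ (χ.semidirectZPow hχ g ζ).ker := by
  rintro ⟨x, k⟩ hp
  rw [MonoidHom.mem_ker, mulZPow_apply] at hp
  rw [MonoidHom.mem_ker, semidirectZPow_apply]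
  have hgk : g ^ k.toAdd = ((x⁻¹ : N) : G) := eq_inv_of_mul_eq_one_right hp
  have hζk : ζ ^ k.toAdd = (χ x)⁻¹ := by
    rw [← hζ _ (hgk ▸ (x⁻¹).2), ← map_inv]
    exact congrArg χ (Subtype.ext hgk)
  rw [hζk, mul_inv_cancel]

theorem exists_extension_of_zpow_eq (hχ : χ.ConjInvariant) {g : G}
    (hg : ∀ q : G ⧸ N, q ∈ zpowers (g : G ⧸ N)) {ζ : A}
    (hζ : ∀ (k : ℤ) (h : g ^ k ∈ N), χ ⟨g ^ k, h⟩ = ζ ^ k) :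
    ∃ ψ : G →* A, ∀ x : N, ψ x = χ x := by
  obtain ⟨ψ, hψ⟩ := ((N.mulZPow g).liftOfSurjective (mulZPow_surjective hg)).symm.surjective
    ⟨χ.semidirectZPow hχ g ζ, ker_mulZPow_le_ker_semidirectZPow hχ hζ⟩
  have hcomp : ψ.comp (N.mulZPow g) = χ.semidirectZPow hχ g ζ := congrArg Subtype.val hψ
  exact ⟨ψ, fun x => by
    simpa [mulZPow_apply, semidirectZPow_apply] using DFunLike.congr_fun hcomp ⟨x, 1⟩⟩

theorem exists_zpow_eq_of_exists_pow_eq (hroot : ∀ (a : A) (n : ℕ), n ≠ 0 → ∃ ζ : A, ζ ^ n = a)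
    (g : G) :
    ∃ ζ : A, ∀ (k : ℤ) (h : g ^ k ∈ N), χ ⟨g ^ k, h⟩ = ζ ^ k := by
  set m := orderOf (g : G ⧸ N)
  have hgm : g ^ (m : ℤ) ∈ N := (zpow_mem_iff_orderOf_mk_dvd g m).2 dvd_rfl
  obtain ⟨ζ, hζ⟩ : ∃ ζ : A, ζ ^ (m : ℤ) = χ ⟨g ^ (m : ℤ), hgm⟩ := by
    rcases eq_or_ne m 0 with hm | hm
    · exact ⟨1, by simp only [hm, Nat.cast_zero, zpow_zero]; exact (map_one χ).symm⟩
    · obtain ⟨ζ, hζ⟩ := hroot _ m hm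
      exact ⟨ζ, by exact_mod_cast hζ⟩
  refine ⟨ζ, fun k hk => ?_⟩
  obtain ⟨t, rfl⟩ := (zpow_mem_iff_orderOf_mk_dvd g k).1 hk
  have : (⟨g ^ (m * t), hk⟩ : N) = ⟨g ^ (m : ℤ), hgm⟩ ^ t := Subtype.ext (by simp [zpow_mul])
  rw [this, map_zpow, ← hζ, zpow_mul]

theorem exists_extension_of_isCyclic_quotient [IsCyclic (G ⧸ N)] (hχ : χ.ConjInvariant)
    (hroot : ∀ (a : A) (n : ℕ), n ≠ 0 → ∃ ζ : A, ζ ^ n = a) :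
    ∃ ψ : G →* A, ∀ x : N, ψ x = χ x := by
  obtain ⟨q, hq⟩ := IsCyclic.exists_generator (α := G ⧸ N)
  obtain ⟨g, rfl⟩ := QuotientGroup.mk_surjective q
  obtain ⟨ζ, hζ⟩ := χ.exists_zpow_eq_of_exists_pow_eq hroot g
  exact χ.exists_extension_of_zpow_eq hχ hq hζ

end MonoidHom

end

theorem IsAlgClosed.exists_units_pow_eq {k : Type*} [Field k] [IsAlgClosed k] (a : kˣ) {n : ℕ}
    (hn : n ≠ 0) : ∃ ζ : kˣ, ζ ^ n = a := by
  obtain ⟨z, hz⟩ := IsAlgClosed.exists_pow_nat_eq (a : k) (Nat.pos_of_ne_zero hn)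
  have hz0 : z ≠ 0 := by
    rintro rfl
    exact a.ne_zero (by rw [← hz, zero_pow hn])
  exact ⟨Units.mk0 z hz0, Units.ext (by simpa using hz)⟩

theorem stmt_17_general {G : Type*} [Group G] (G' : Subgroup G) (hn : G'.Normal)
    [IsCyclic (G ⧸ G')]
    (χ : ↥G' →* ℂˣ)
    (hinv : ∀ (g : G) (x : ↥G'),
      χ ⟨g * ↑x * g⁻¹, hn.conj_mem ↑x x.2 g⟩ = χ x) :
    ∃ χext : G →* ℂˣ, ∀ x : ↥G', χext ↑x = χ x :=
  χ.exists_extension_of_isCyclic_quotient hinv fun a _ hn => IsAlgClosed.exists_units_pow_eq a hn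

theorem stmt_17 {G : Type*} [Group G] (G' : Subgroup G) (hn : G'.Normal)
    [Finite (G ⧸ G')] [IsCyclic (G ⧸ G')]
    (χ : ↥G' →* ℂˣ)
    (hinv : ∀ (g : G) (x : ↥G'),
      χ ⟨g * ↑x * g⁻¹, hn.conj_mem ↑x x.2 g⟩ = χ x) :
    ∃ χext : G →* ℂˣ, ∀ x : ↥G', χext ↑x = χ x :=
  stmt_17_general G' hn χ hinv
end
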